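/- arXiv:2010.12487 — 2 statements merged into one kernel-verified Lean document; each statement's English description precedes it below -/
import Mathlib

section
/- Let d ≥ 2 and ν > 0, and let Σ ∈ ℝ^{(d+1)×(d+1)} be the matrix with Σ_{0,0} = α_0, Σ_{0,j} = Σ_{j,0} = Σ_{j,j} = α_1 for 1 ≤ j ≤ d, and Σ_{j,k} = α_2 for 1 ≤ j ≠ k ≤ d. Then Σ is invertible and ‖Σ⁻¹‖_op ≤ 70 · d^{3/2} · exp(5/(2ν²)), where ‖·‖_op is the ℓ²→ℓ² operator norm. -/
noncomputable section

/-- The LIME weight function ψ_ν(t) = exp(−(1−√(1−t))²/(2ν²)). -/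
def psi (ν t : ℝ) : ℝ := Real.exp (-(1 - Real.sqrt (1 - t)) ^ 2 / (2 * ν ^ 2))

/-- The coefficient α_p(d,ν). -/
def alpha (d : ℕ) (ν : ℝ) (p : ℕ) : ℝ :=
  (1 / (d : ℝ)) * ∑ s ∈ Finset.Icc 1 d,
    (∏ k ∈ Finset.range p, (((d : ℝ) - (s : ℝ) - (k : ℝ)) / ((d : ℝ) - (k : ℝ)))) *
      psi ν ((s : ℝ) / (d : ℝ))

/-- The normalization constant c_d = (d−1)α₀α₂ − dα₁² + α₀α₁. -/
def cConst (d : ℕ) (ν : ℝ) : ℝ :=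
  ((d : ℝ) - 1) * alpha d ν 0 * alpha d ν 2 - (d : ℝ) * (alpha d ν 1) ^ 2
    + alpha d ν 0 * alpha d ν 1

/-- σ₀ = (d−1)α₂ + α₁. -/
def sigma0 (d : ℕ) (ν : ℝ) : ℝ := ((d : ℝ) - 1) * alpha d ν 2 + alpha d ν 1

/-- σ₁ = −α₁. -/
def sigma1 (d : ℕ) (ν : ℝ) : ℝ := -(alpha d ν 1)

/-- σ₂ = ((d−2)α₀α₂ − (d−1)α₁² + α₀α₁)/(α₁−α₂). -/
def sigma2 (d : ℕ) (ν : ℝ) : ℝ :=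
  (((d : ℝ) - 2) * alpha d ν 0 * alpha d ν 2 - ((d : ℝ) - 1) * (alpha d ν 1) ^ 2
      + alpha d ν 0 * alpha d ν 1) / (alpha d ν 1 - alpha d ν 2)

/-- σ₃ = (α₁² − α₀α₂)/(α₁−α₂). -/
def sigma3 (d : ℕ) (ν : ℝ) : ℝ :=
  ((alpha d ν 1) ^ 2 - alpha d ν 0 * alpha d ν 2) / (alpha d ν 1 - alpha d ν 2)

/-- The matrix Σ ∈ ℝ^{(d+1)×(d+1)}: Σ₀₀ = α₀; Σ₀ⱼ = Σⱼ₀ = Σⱼⱼ = α₁ for 1 ≤ j ≤ d;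
Σⱼₖ = α₂ for 1 ≤ j ≠ k ≤ d. -/
def SigmaMat (d : ℕ) (ν : ℝ) : Matrix (Fin (d + 1)) (Fin (d + 1)) ℝ :=
  Matrix.of fun i j =>
    if i = 0 ∧ j = 0 then alpha d ν 0
    else if i = 0 ∨ j = 0 ∨ i = j then alpha d ν 1
    else alpha d ν 2

/-- The ℓ²→ℓ² operator norm of a square real matrix. -/
def opNorm {m : ℕ} (A : Matrix (Fin m) (Fin m) ℝ) : ℝ :=
  ‖Matrix.toEuclideanCLM (𝕜 := ℝ) A‖

open Finset Real Matrix

/-!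
The matrix Σ is uniformly positive definite. For x = (x₀, y) with S = ∑ yᵢ and Q = ∑ yᵢ² its
quadratic form is α₀x₀² + 2α₁x₀S + α₂S² + (α₁ - α₂)Q. With m = exp(-1/(2ν²)) ≤ ψ_ν, the
coefficients are weighted sums with weights in [m, 1], which gives α₀ ≥ m, α₁ - α₂ ≥ m/6 and,
through Lagrange's identity for the weighted variance of s ↦ d - s, a lower bound
m²(d+1)/24 on the determinant-like quantity c_d. Together with S² ≤ dQ this makes the
quadratic form at least (m²/24)‖x‖², hence ‖Σ⁻¹‖ ≤ 24 exp(1/ν²).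
-/

lemma sum_Icc_one_natCast (d : ℕ) : ∑ s ∈ Icc 1 d, (s : ℝ) = d * (d + 1) / 2 := by
  induction d with
  | zero => simp
  | succ n ih => rw [sum_Icc_succ_top (by omega), ih]; push_cast; ring

lemma sum_Icc_one_natCast_sq (d : ℕ) :
    ∑ s ∈ Icc 1 d, (s : ℝ) ^ 2 = d * (d + 1) * (2 * d + 1) / 6 := by
  induction d with
  | zero => simp
  | succ n ih => rw [sum_Icc_succ_top (by omega), ih]; push_cast; ring

lemma sum_mul_sum_sq_sub_sq {ι : Type*} (s : Finset ι) (u v : ι → ℝ) :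
    (∑ i ∈ s, v i) * (∑ i ∈ s, u i ^ 2 * v i) - (∑ i ∈ s, u i * v i) ^ 2
      = (∑ i ∈ s, ∑ j ∈ s, v i * v j * (u i - u j) ^ 2) / 2 := by
  have h : ∀ i j, v i * v j * (u i - u j) ^ 2
      = u i ^ 2 * v i * v j + v i * (u j ^ 2 * v j) - 2 * (u i * v i * (u j * v j)) := by
    intro i j; ring
  simp only [h, sum_add_distrib, sum_sub_distrib, ← mul_sum, ← sum_mul, sq (∑ i ∈ s, u i * v i)]
  ring

lemma sq_mul_le_sum_mul_sum_sq_sub_sq {ι : Type*} (s : Finset ι) (u w : ι → ℝ) {m : ℝ}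
    (hm : 0 ≤ m) (hw : ∀ i ∈ s, m ≤ w i) :
    m ^ 2 * (#s * ∑ i ∈ s, u i ^ 2 - (∑ i ∈ s, u i) ^ 2)
      ≤ (∑ i ∈ s, w i) * (∑ i ∈ s, u i ^ 2 * w i) - (∑ i ∈ s, u i * w i) ^ 2 := by
  calc m ^ 2 * (#s * ∑ i ∈ s, u i ^ 2 - (∑ i ∈ s, u i) ^ 2)
      = (∑ i ∈ s, ∑ j ∈ s, m * m * (u i - u j) ^ 2) / 2 := by
        rw [← sum_mul_sum_sq_sub_sq, sum_const, nsmul_eq_mul, ← sum_mul, ← sum_mul]; ring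
    _ ≤ (∑ i ∈ s, ∑ j ∈ s, w i * w j * (u i - u j) ^ 2) / 2 := by
        gcongr with i hi j hj
        · exact hm.trans (hw i hi)
        · exact hw i hi
        · exact hw j hj
    _ = _ := (sum_mul_sum_sq_sub_sq s u w).symm

lemma mul_add_le_quadratic_of_det {a b c δ l n x S Q : ℝ} (hn : 0 < n) (hS : S ^ 2 ≤ n * Q)
    (hla : l < a) (hlδ : l ≤ δ) (hdet : n * b ^ 2 ≤ (a - l) * (n * c + δ - l)) :
    l * (x ^ 2 + Q) ≤ a * x ^ 2 + 2 * b * x * S + c * S ^ 2 + δ * Q := by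
  have hA : 0 < n * (a - l) := mul_pos hn (sub_pos.2 hla)
  have key : n * (a - l) * (a * x ^ 2 + 2 * b * x * S + c * S ^ 2 + δ * Q - l * (x ^ 2 + Q))
      = n * ((a - l) * x + b * S) ^ 2 + ((a - l) * (n * c + δ - l) - n * b ^ 2) * S ^ 2
        + (a - l) * (δ - l) * (n * Q - S ^ 2) := by ring
  have hrhs : 0 ≤ n * ((a - l) * x + b * S) ^ 2 + ((a - l) * (n * c + δ - l) - n * b ^ 2) * S ^ 2
      + (a - l) * (δ - l) * (n * Q - S ^ 2) :=
    add_nonneg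
      (add_nonneg (mul_nonneg hn.le (sq_nonneg _)) (mul_nonneg (sub_nonneg.2 hdet) (sq_nonneg _)))
      (mul_nonneg (mul_nonneg (sub_pos.2 hla).le (sub_nonneg.2 hlδ)) (sub_nonneg.2 hS))
  exact sub_nonneg.1 (nonneg_of_mul_nonneg_right (key ▸ hrhs) hA)

lemma isUnit_and_opNorm_inv_le_of_coercive {n : ℕ} (A : Matrix (Fin n) (Fin n) ℝ) {l : ℝ}
    (hl : 0 < l) (hA : ∀ x, l * (x ⬝ᵥ x) ≤ x ⬝ᵥ (A *ᵥ x)) : IsUnit A ∧ opNorm A⁻¹ ≤ l⁻¹ := by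
  have hbound : ∀ x : EuclideanSpace ℝ (Fin n), l * ‖x‖ ≤ ‖toEuclideanCLM (𝕜 := ℝ) A x‖ := by
    intro x
    rcases eq_or_ne x 0 with rfl | hx
    · simp
    have hx' : 0 < ‖x‖ := norm_pos_iff.2 hx
    have h : l * ‖x‖ ^ 2 ≤ ‖x‖ * ‖toEuclideanCLM (𝕜 := ℝ) A x‖ := by
      calc l * ‖x‖ ^ 2 ≤ inner ℝ x (toEuclideanCLM (𝕜 := ℝ) A x) := by
            rw [inner_toEuclideanCLM, ← real_inner_self_eq_norm_sq,
              EuclideanSpace.inner_eq_star_dotProduct, star_trivial]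
            exact hA _
        _ ≤ _ := real_inner_le_norm _ _
    nlinarith
  have hunit : IsUnit A := by
    rw [← mulVec_injective_iff_isUnit]
    intro x y hxy
    have h := hbound (WithLp.toLp 2 (x - y))
    rw [toEuclideanCLM_toLp, mulVec_sub, hxy, sub_self, WithLp.toLp_zero, norm_zero] at h
    have : WithLp.toLp 2 (x - y) = 0 := norm_le_zero_iff.1 (nonpos_of_mul_nonpos_right h hl)
    simpa [sub_eq_zero] using this
  refine ⟨hunit, ContinuousLinearMap.opNorm_le_bound _ (inv_nonneg.2 hl.le) fun y => ?_⟩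
  have hy : toEuclideanCLM (𝕜 := ℝ) A (toEuclideanCLM (𝕜 := ℝ) A⁻¹ y) = y := by
    rw [← mul_apply_eq_comp, ← map_mul,
      mul_nonsing_inv _ ((isUnit_iff_isUnit_det A).1 hunit), map_one, one_apply_eq_self]
  rw [← div_eq_inv_mul, le_div_iff₀' hl]
  simpa [hy] using hbound (toEuclideanCLM (𝕜 := ℝ) A⁻¹ y)

lemma psi_le_one (ν t : ℝ) : psi ν t ≤ 1 := by
  rw [psi, exp_le_one_iff]
  exact div_nonpos_of_nonpos_of_nonneg (neg_nonpos.2 (sq_nonneg _)) (by positivity)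

lemma exp_le_psi (ν : ℝ) {t : ℝ} (ht : 0 ≤ t) : exp (-1 / (2 * ν ^ 2)) ≤ psi ν t := by
  have h₀ : 0 ≤ √(1 - t) := sqrt_nonneg _
  have h₁ : √(1 - t) ≤ 1 := sqrt_le_one.2 (by linarith)
  rw [psi, exp_le_exp]
  gcongr
  nlinarith

lemma alpha_zero_eq (d : ℕ) (ν : ℝ) :
    alpha d ν 0 = (∑ s ∈ Icc 1 d, psi ν (s / d)) / d := by
  simp [alpha, div_eq_inv_mul]

lemma alpha_one_eq (d : ℕ) (ν : ℝ) :
    alpha d ν 1 = (∑ s ∈ Icc 1 d, (d - s : ℝ) * psi ν (s / d)) / d ^ 2 := by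
  simp only [alpha, prod_range_one, mul_sum, sum_div]
  refine sum_congr rfl fun s _ => ?_
  push_cast
  ring

lemma alpha_two_eq (d : ℕ) (ν : ℝ) :
    alpha d ν 2
      = (∑ s ∈ Icc 1 d, (d - s : ℝ) * (d - s - 1) * psi ν (s / d)) / (d ^ 2 * (d - 1)) := by
  simp only [alpha, prod_range_succ, prod_range_zero, mul_sum, ← div_div, sum_div]
  refine sum_congr rfl fun s _ => ?_
  push_cast
  ring

lemma alpha_one_add_mul_alpha_two {d : ℕ} (hd : d ≠ 1) (ν : ℝ) :
    alpha d ν 1 + (d - 1) * alpha d ν 2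
      = (∑ s ∈ Icc 1 d, (d - s : ℝ) ^ 2 * psi ν (s / d)) / d ^ 2 := by
  have hd' : (d - 1 : ℝ) ≠ 0 := sub_ne_zero.2 (by exact_mod_cast hd)
  rw [alpha_one_eq, alpha_two_eq, mul_div_assoc', mul_comm (d ^ 2 : ℝ), ← div_div,
    mul_div_cancel_left₀ _ hd', ← add_div, ← sum_add_distrib]
  congr 1
  refine sum_congr rfl fun s _ => by ring

lemma alpha_one_sub_alpha_two {d : ℕ} (hd : d ≠ 1) (ν : ℝ) :
    alpha d ν 1 - alpha d ν 2
      = (∑ s ∈ Icc 1 d, (s * (d - s) : ℝ) * psi ν (s / d)) / (d ^ 2 * (d - 1)) := by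
  have hd' : (d - 1 : ℝ) ≠ 0 := sub_ne_zero.2 (by exact_mod_cast hd)
  rw [alpha_one_eq, alpha_two_eq, ← mul_div_mul_right _ _ hd', ← sub_div, sum_mul,
    ← sum_sub_distrib]
  congr 1
  refine sum_congr rfl fun s _ => by ring

lemma cConst_eq {d : ℕ} (hd : d ≠ 1) (ν : ℝ) :
    cConst d ν = ((∑ s ∈ Icc 1 d, psi ν (s / d)) * (∑ s ∈ Icc 1 d, (d - s : ℝ) ^ 2 * psi ν (s / d))
      - (∑ s ∈ Icc 1 d, (d - s : ℝ) * psi ν (s / d)) ^ 2) / d ^ 3 := by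
  have h : cConst d ν
      = alpha d ν 0 * (alpha d ν 1 + (d - 1) * alpha d ν 2) - d * alpha d ν 1 ^ 2 := by
    rw [cConst]; ring
  rw [h, alpha_one_add_mul_alpha_two hd, alpha_zero_eq, alpha_one_eq]
  rcases eq_or_ne (d : ℝ) 0 with h0 | h0
  · simp [h0]
  · field_simp

lemma exp_le_alpha_zero {d : ℕ} (hd : d ≠ 0) (ν : ℝ) : exp (-1 / (2 * ν ^ 2)) ≤ alpha d ν 0 := by
  have hd' : (0 : ℝ) < d := by positivity
  rw [alpha_zero_eq, le_div_iff₀ hd']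
  calc exp (-1 / (2 * ν ^ 2)) * d = ∑ s ∈ Icc 1 d, exp (-1 / (2 * ν ^ 2)) := by simp [mul_comm]
    _ ≤ ∑ s ∈ Icc 1 d, psi ν (s / d) := sum_le_sum fun s _ => exp_le_psi ν (by positivity)

lemma alpha_zero_add_alpha_one_add_mul_alpha_two_le {d : ℕ} (hd : d ≠ 1) (ν : ℝ) :
    alpha d ν 0 + (alpha d ν 1 + (d - 1) * alpha d ν 2) ≤ d + 1 := by
  have h₀ : alpha d ν 0 ≤ 1 := by
    rw [alpha_zero_eq]
    refine div_le_one_of_le₀ ?_ (by positivity)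
    simpa using sum_le_card_nsmul (Icc 1 d) _ 1 fun s _ => psi_le_one ν (s / d)
  have h₁ : alpha d ν 1 + (d - 1) * alpha d ν 2 ≤ d := by
    rw [alpha_one_add_mul_alpha_two hd]
    refine div_le_of_le_mul₀ (by positivity) (by positivity) ?_
    refine (sum_le_card_nsmul (Icc 1 d) _ ((d : ℝ) ^ 2) fun s hs => ?_).trans_eq (by simp)
    have hs' : (s : ℝ) ≤ d := by exact_mod_cast (mem_Icc.1 hs).2
    calc (d - s : ℝ) ^ 2 * psi ν (s / d) ≤ (d - s : ℝ) ^ 2 * 1 :=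
          mul_le_mul_of_nonneg_left (psi_le_one ν _) (sq_nonneg _)
      _ ≤ (d : ℝ) ^ 2 := by nlinarith [(s.cast_nonneg : (0 : ℝ) ≤ s)]
  linarith

lemma exp_div_six_le_alpha_one_sub_alpha_two {d : ℕ} (hd : 2 ≤ d) (ν : ℝ) :
    exp (-1 / (2 * ν ^ 2)) / 6 ≤ alpha d ν 1 - alpha d ν 2 := by
  set m := exp (-1 / (2 * ν ^ 2))
  have hd' : (2 : ℝ) ≤ d := by exact_mod_cast hd
  have hcoeff : ∑ s ∈ Icc 1 d, (s * (d - s) : ℝ) = d * (d + 1) * (d - 1) / 6 := by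
    simp only [mul_sub, sum_sub_distrib, ← sq, ← sum_mul, sum_Icc_one_natCast,
      sum_Icc_one_natCast_sq]
    ring
  have hlow :
      m * (d * (d + 1) * (d - 1) / 6) ≤ ∑ s ∈ Icc 1 d, (s * (d - s) : ℝ) * psi ν (s / d) := by
    rw [← hcoeff, mul_sum]
    refine sum_le_sum fun s hs => ?_
    have hs' : (s : ℝ) ≤ d := by exact_mod_cast (mem_Icc.1 hs).2
    rw [mul_comm m]
    exact mul_le_mul_of_nonneg_left (exp_le_psi ν (by positivity))
      (mul_nonneg s.cast_nonneg (by linarith))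
  rw [alpha_one_sub_alpha_two (by omega), le_div_iff₀ (by nlinarith)]
  nlinarith [mul_nonneg (mul_nonneg (exp_pos (-1 / (2 * ν ^ 2))).le (by linarith : (0 : ℝ) ≤ d))
    (by linarith : (0 : ℝ) ≤ d - 1)]

lemma exp_sq_mul_le_cConst {d : ℕ} (hd : 2 ≤ d) (ν : ℝ) :
    exp (-1 / (2 * ν ^ 2)) ^ 2 * (d + 1) / 24 ≤ cConst d ν := by
  have hd' : (2 : ℝ) ≤ d := by exact_mod_cast hd
  have hvar : (#(Icc 1 d) * ∑ s ∈ Icc 1 d, (d - s : ℝ) ^ 2 - (∑ s ∈ Icc 1 d, (d - s : ℝ)) ^ 2)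
      = d ^ 2 * (d ^ 2 - 1) / 12 := by
    simp only [sub_sq, sum_add_distrib, sum_sub_distrib, sum_const, nsmul_eq_mul, ← mul_sum,
      sum_Icc_one_natCast, sum_Icc_one_natCast_sq, Nat.card_Icc, add_tsub_cancel_right]
    ring
  have hlow := sq_mul_le_sum_mul_sum_sq_sub_sq (Icc 1 d) (fun s : ℕ => (d - s : ℝ))
    (fun s => psi ν (s / d)) (exp_pos _).le fun s _ => exp_le_psi ν (by positivity)
  rw [hvar] at hlow
  rw [cConst_eq (by omega), le_div_iff₀ (by positivity)]
  have hgap : 0 ≤ exp (-1 / (2 * ν ^ 2)) ^ 2 * d ^ 2 * (d + 1) * (d - 2) := by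
    have : (0 : ℝ) ≤ d - 2 := by linarith
    positivity
  nlinarith

lemma SigmaMat_succ_succ (d : ℕ) (ν : ℝ) (i j : Fin d) :
    SigmaMat d ν i.succ j.succ = if i = j then alpha d ν 1 else alpha d ν 2 := by
  simp [SigmaMat, Fin.succ_ne_zero]

lemma dotProduct_SigmaMat_mulVec (d : ℕ) (ν : ℝ) (x : Fin (d + 1) → ℝ) :
    x ⬝ᵥ (SigmaMat d ν *ᵥ x)
      = alpha d ν 0 * x 0 ^ 2 + 2 * alpha d ν 1 * x 0 * ∑ i : Fin d, x i.succ
        + alpha d ν 2 * (∑ i : Fin d, x i.succ) ^ 2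
        + (alpha d ν 1 - alpha d ν 2) * ∑ i : Fin d, x i.succ ^ 2 := by
  have row : ∀ i : Fin d, ∑ j, (if i = j then alpha d ν 1 else alpha d ν 2) * x j.succ
      = alpha d ν 2 * ∑ j : Fin d, x j.succ + (alpha d ν 1 - alpha d ν 2) * x i.succ := by
    intro i
    have h : ∀ j, (if i = j then alpha d ν 1 else alpha d ν 2) * x j.succ
        = alpha d ν 2 * x j.succ
          + if i = j then (alpha d ν 1 - alpha d ν 2) * x j.succ else 0 := by
      intro j; split_ifs <;> ring
    simp only [h, sum_add_distrib, ← mul_sum, sum_ite_eq, mem_univ, if_true]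
  simp only [dotProduct, mulVec, Fin.sum_univ_succ, SigmaMat_succ_succ, row]
  simp only [SigmaMat, of_apply, Fin.succ_ne_zero, and_self, and_false, false_and, true_or,
    or_true, if_true, if_false]
  simp only [mul_add, sum_add_distrib, ← sum_mul, ← mul_sum,
    mul_left_comm _ (alpha d ν 1 - alpha d ν 2), ← sq]
  ring

lemma mul_dotProduct_self_le_dotProduct_SigmaMat_mulVec {d : ℕ} (hd : 2 ≤ d) (ν : ℝ)
    (x : Fin (d + 1) → ℝ) :
    exp (-1 / (2 * ν ^ 2)) ^ 2 / 24 * (x ⬝ᵥ x) ≤ x ⬝ᵥ (SigmaMat d ν *ᵥ x) := by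
  set m := exp (-1 / (2 * ν ^ 2))
  have hm₀ : 0 < m := exp_pos _
  have hm₁ : m ≤ 1 :=
    exp_le_one_iff.2 (div_nonpos_of_nonpos_of_nonneg (by norm_num) (by positivity))
  have hα₀ := exp_le_alpha_zero (by omega : d ≠ 0) ν
  have hδ := exp_div_six_le_alpha_one_sub_alpha_two hd ν
  have hc := exp_sq_mul_le_cConst hd ν
  have htrace := alpha_zero_add_alpha_one_add_mul_alpha_two_le (by omega : d ≠ 1) ν
  have hS : (∑ i : Fin d, x i.succ) ^ 2 ≤ d * ∑ i : Fin d, x i.succ ^ 2 := by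
    simpa using sq_sum_le_card_mul_sum_sq (s := univ) (f := fun i : Fin d => x i.succ)
  rw [dotProduct_SigmaMat_mulVec, show x ⬝ᵥ x = x 0 ^ 2 + ∑ i : Fin d, x i.succ ^ 2 by
    simp [dotProduct, Fin.sum_univ_succ, sq]]
  refine mul_add_le_quadratic_of_det (by positivity) hS (by nlinarith) (by nlinarith) ?_
  rw [cConst] at hc
  nlinarith [mul_le_mul_of_nonneg_left htrace (by positivity : 0 ≤ m ^ 2 / 24)]

theorem opNorm_SigmaMat_inv_le_general (d : ℕ) (hd : 2 ≤ d) (ν : ℝ) :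
    IsUnit (SigmaMat d ν)
      ∧ opNorm (SigmaMat d ν)⁻¹ ≤ 70 * (d : ℝ) ^ ((3 : ℝ) / 2) * Real.exp (5 / (2 * ν ^ 2)) := by
  obtain ⟨hunit, hnorm⟩ := isUnit_and_opNorm_inv_le_of_coercive (SigmaMat d ν) (by positivity)
    (mul_dotProduct_self_le_dotProduct_SigmaMat_mulVec hd ν)
  refine ⟨hunit, hnorm.trans ?_⟩
  have hexp : 1 ≤ exp (5 / (2 * ν ^ 2)) * exp (-1 / (2 * ν ^ 2)) ^ 2 := by
    rw [← exp_nat_mul, ← exp_add]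
    exact one_le_exp (by ring_nf; positivity)
  have hpow : (1 : ℝ) ≤ (d : ℝ) ^ ((3 : ℝ) / 2) :=
    one_le_rpow (by exact_mod_cast (by omega : 1 ≤ d)) (by norm_num)
  calc (exp (-1 / (2 * ν ^ 2)) ^ 2 / 24)⁻¹ ≤ 24 * exp (5 / (2 * ν ^ 2)) := by
        rw [inv_div, div_le_iff₀ (by positivity)]
        linarith
    _ ≤ 70 * (d : ℝ) ^ ((3 : ℝ) / 2) * exp (5 / (2 * ν ^ 2)) := by
        gcongr
        linarith

/-- Σ is invertible and ‖Σ⁻¹‖_op ≤ 70·d^{3/2}·exp(5/(2ν²)). -/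
theorem opNorm_SigmaMat_inv_le (d : ℕ) (hd : 2 ≤ d) (ν : ℝ) (hν : 0 < ν) :
    IsUnit (SigmaMat d ν)
      ∧ opNorm (SigmaMat d ν)⁻¹ ≤ 70 * (d : ℝ) ^ ((3 : ℝ) / 2) * Real.exp (5 / (2 * ν ^ 2)) :=
  opNorm_SigmaMat_inv_le_general d hd ν
end
end

section
/- Let d ≥ 2, ν > 0, let u_1,…,u_d be positive reals and let f : ℝ^d → ℝ be measurable and bounded on the closed Euclidean unit ball. Let S be the LIME random subset of {1,…,d} with z_j = 1{j∉S}, π = ψ_ν(|S|/d), ζ = (1, z_1,…,z_d), Σ = E[π ζ ζᵀ], Γ^f = E[π f(φ_S) ζ], and β^f = Σ⁻¹ Γ^f ∈ ℝ^{d+1}. Then the intercept satisfies β^f_0 = c_d⁻¹ (σ_0 E[π f(φ_S)] + σ_1 Σ_{k=1}^d E[π z_k f(φ_S)]), and for every 1 ≤ j ≤ d, β^f_j = c_d⁻¹ (σ_1 E[π f(φ_S)] + σ_2 E[π z_j f(φ_S)] + σ_3 Σ_{k=1, k≠j}^d E[π z_k f(φ_S)]). -/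
noncomputable section

/-- Expectation of `g S` where `S` is the LIME random subset of `{1,…,d}`:
first draw `s` uniformly in `{1,…,d}`, then `S` uniformly among subsets of cardinality `s`. -/
def limeExp (d : ℕ) (g : Finset (Fin d) → ℝ) : ℝ :=
  (1 / (d : ℝ)) * ∑ s ∈ Finset.Icc 1 d, ((d.choose s : ℝ))⁻¹ *
    ∑ S ∈ Finset.univ.filter (fun S : Finset (Fin d) => S.card = s), g S

/-- Normalized TF-IDF of the perturbed document obtained by deleting the words
indexed by `S`: `(φ_S)_j = 1{j ∉ S} · u_j / √(∑_{k ∉ S} u_k²)`, and `φ_S = 0`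
when all words are deleted. -/
def phiS {d : ℕ} (u : Fin d → ℝ) (S : Finset (Fin d)) : Fin d → ℝ :=
  if S = Finset.univ then 0 else
    fun j => (if j ∉ S then (1 : ℝ) else 0) * u j / Real.sqrt (∑ k ∈ Sᶜ, (u k) ^ 2)

/-- The vector of interpretable features with a leading 1 for the intercept:
ζ(S) = (1, z₁, …, z_d) with z_j = 1{j ∉ S}. -/
def zeta (d : ℕ) (S : Finset (Fin d)) : Fin (d + 1) → ℝ :=
  Fin.cons 1 (fun j : Fin d => if j ∉ S then (1 : ℝ) else 0)

/-- Σ = E[π ζ ζᵀ] ∈ ℝ^{(d+1)×(d+1)}. -/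
def SigmaE (d : ℕ) (ν : ℝ) : Matrix (Fin (d + 1)) (Fin (d + 1)) ℝ :=
  Matrix.of fun a b =>
    limeExp d (fun S => psi ν ((S.card : ℝ) / (d : ℝ)) * zeta d S a * zeta d S b)

/-- β^f = Σ⁻¹ Γ^f, where Γ^f = E[π f(φ_S) ζ] and `g S` stands for `f (φ_S)`. -/
def betaF (d : ℕ) (ν : ℝ) (g : Finset (Fin d) → ℝ) : Fin (d + 1) → ℝ :=
  (SigmaE d ν)⁻¹.mulVec
    (fun a => limeExp d (fun S => psi ν ((S.card : ℝ) / (d : ℝ)) * g S * zeta d S a))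

/-!
Every entry of `Σ` has the form `E[π 1{T ∩ S = ∅}]` with `|T| ≤ 2`, and since
`P(T ∩ S = ∅ | |S| = s) = C(d - |T|, s) / C(d, s)` this expectation is `α_{|T|}`. Hence
`Σ = [[α₀, α₁ 1ᵀ], [α₁ 1, (α₁ - α₂) I + α₂ J]]`, a bordered compound-symmetric matrix with
`det Σ = (α₁ - α₂)^(d-1) c_d`, whose inverse is explicit as soon as `α₁ ≠ α₂` and `c_d ≠ 0`.
With `w_s = ψ_ν(s/d)`, `α₁ - α₂` is a positive combination of the `w_s`, and
`d³ c_d = (∑ w)(∑ w (d - s)²) - (∑ w (d - s))²`, which is positive by the strict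
Cauchy–Schwarz inequality. Reading off `Σ⁻¹ Γ` row by row gives the coefficients.
-/

open Finset Matrix

section CauchySchwarz

variable {ι R : Type*} [CommRing R] (I : Finset ι) (w a : ι → R)

lemma two_mul_sum_mul_sum_sub_sq :
    2 * ((∑ s ∈ I, w s) * (∑ s ∈ I, w s * a s ^ 2) - (∑ s ∈ I, w s * a s) ^ 2)
      = ∑ s ∈ I, ∑ t ∈ I, w s * w t * (a s - a t) ^ 2 := by
  have h : ∀ s t, w s * w t * (a s - a t) ^ 2
      = w s * a s ^ 2 * w t + w s * (w t * a t ^ 2) - 2 * (w s * a s) * (w t * a t) := by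
    intros; ring
  simp only [h, sum_add_distrib, sum_sub_distrib, ← mul_sum, ← sum_mul]
  ring

lemma sq_sum_mul_lt_sum_mul_sum [LinearOrder R] [IsStrictOrderedRing R]
    (hw : ∀ s ∈ I, 0 ≤ w s) {i j : ι} (hi : i ∈ I) (hj : j ∈ I)
    (hwi : 0 < w i) (hwj : 0 < w j) (hij : a i ≠ a j) :
    (∑ s ∈ I, w s * a s) ^ 2 < (∑ s ∈ I, w s) * ∑ s ∈ I, w s * a s ^ 2 := by
  have hterm : ∀ s ∈ I, ∀ t ∈ I, 0 ≤ w s * w t * (a s - a t) ^ 2 := fun s hs t ht =>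
    mul_nonneg (mul_nonneg (hw s hs) (hw t ht)) (sq_nonneg _)
  have hpos : 0 < ∑ s ∈ I, ∑ t ∈ I, w s * w t * (a s - a t) ^ 2 :=
    sum_pos' (fun s hs => sum_nonneg (hterm s hs)) ⟨i, hi, sum_pos' (hterm i hi)
      ⟨j, hj, mul_pos (mul_pos hwi hwj) (sq_pos_of_ne_zero (sub_ne_zero.2 hij))⟩⟩
  linarith [two_mul_sum_mul_sum_sub_sq I w a]

end CauchySchwarz

section BorderedMatrix

variable {K : Type*} {n : ℕ}

def borderedMatrix (n : ℕ) (a b c e : K) : Matrix (Fin (n + 1)) (Fin (n + 1)) K :=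
  Matrix.of fun i j =>
    Fin.cases (Fin.cases a (fun _ => b) j)
      (fun i' => Fin.cases b (fun j' => if i' = j' then c else e) j) i

variable (a b c e : K)

@[simp] lemma borderedMatrix_zero_zero : borderedMatrix n a b c e 0 0 = a := rfl

@[simp] lemma borderedMatrix_zero_succ (j : Fin n) : borderedMatrix n a b c e 0 j.succ = b := rfl

@[simp] lemma borderedMatrix_succ_zero (i : Fin n) : borderedMatrix n a b c e i.succ 0 = b := rfl

@[simp] lemma borderedMatrix_succ_succ (i j : Fin n) :
    borderedMatrix n a b c e i.succ j.succ = if i = j then c else e := rfl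

variable [Field K]

lemma sum_ite_mul (j : Fin n) (g : Fin n → K) :
    ∑ k, (if j = k then c else e) * g k = (c - e) * g j + e * ∑ k, g k := by
  simp_rw [show ∀ k, (if j = k then c else e) = (c - e) * (if j = k then 1 else 0) + e by
    intro k; split_ifs <;> ring, add_mul, sum_add_distrib, mul_assoc, ← mul_sum]
  simp

lemma sum_ite_const (l : Fin n) :
    ∑ k : Fin n, (if k = l then c else e) = c - e + n * e := by
  simpa [eq_comm, mul_comm] using sum_ite_mul c e l (fun _ => (1 : K))

lemma borderedMatrix_mulVec_zero (v : Fin (n + 1) → K) :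
    (borderedMatrix n a b c e *ᵥ v) 0 = a * v 0 + b * ∑ k : Fin n, v k.succ := by
  simp [mulVec, dotProduct, Fin.sum_univ_succ, mul_sum]

lemma borderedMatrix_mulVec_succ (v : Fin (n + 1) → K) (j : Fin n) :
    (borderedMatrix n a b c e *ᵥ v) j.succ
      = b * v 0 + (c - e) * v j.succ + e * ∑ k : Fin n, v k.succ := by
  simp only [mulVec, dotProduct, Fin.sum_univ_succ, borderedMatrix_succ_zero,
    borderedMatrix_succ_succ, sum_ite_mul]
  ring

theorem inv_borderedMatrix (hD : c - e ≠ 0) (hΔ : a * (c + (n - 1) * e) - n * b ^ 2 ≠ 0) :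
    (borderedMatrix n a b c e)⁻¹ = (a * (c + (n - 1) * e) - n * b ^ 2)⁻¹ •
      borderedMatrix n (c + (n - 1) * e) (-b)
        ((a * (c + (n - 1) * e) - n * b ^ 2 + b ^ 2 - a * e) / (c - e))
        ((b ^ 2 - a * e) / (c - e)) := by
  set Δ := a * (c + (n - 1) * e) - n * b ^ 2 with hΔdef
  refine Matrix.inv_eq_right_inv (Matrix.ext fun i l => ?_)
  change (borderedMatrix n a b c e *ᵥ fun k => _) i = _
  cases i using Fin.cases <;> cases l using Fin.cases <;>
    simp only [borderedMatrix_mulVec_zero, borderedMatrix_mulVec_succ, Matrix.smul_apply,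
      borderedMatrix_zero_zero, borderedMatrix_succ_zero, borderedMatrix_zero_succ,
      borderedMatrix_succ_succ, smul_eq_mul, ← mul_sum, sum_const, card_univ, Fintype.card_fin,
      nsmul_eq_mul, sum_ite_const, Matrix.one_apply, Fin.succ_inj, Fin.succ_ne_zero,
      (Fin.succ_ne_zero _).symm, if_true, if_false]
  all_goals (try split_ifs) <;> field_simp <;> rw [hΔdef] <;> ring

end BorderedMatrix

lemma card_filter_card_eq_disjoint {ι : Type*} [Fintype ι] [DecidableEq ι]
    (T : Finset ι) (s : ℕ) :
    #{S : Finset ι | S.card = s ∧ Disjoint T S} = (Fintype.card ι - T.card).choose s := by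
  rw [← card_compl, ← card_powersetCard]
  congr 1
  ext S
  simp [mem_powersetCard, subset_compl_iff_disjoint_left, and_comm]

lemma cast_choose_sub_div_cast_choose {d p s : ℕ} (hp : p ≤ d) (hs : s ≤ d) :
    ((d - p).choose s : ℝ) / d.choose s
      = ∏ k ∈ range p, ((d : ℝ) - s - k) / ((d : ℝ) - k) := by
  induction p with
  | zero => simp [(Nat.choose_pos hs).ne']
  | succ p ih =>
    rw [prod_range_succ, ← ih (by omega)]
    obtain ⟨m, hm⟩ : ∃ m, d - p = m + 1 := ⟨d - p - 1, by omega⟩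
    have hdp : ((d : ℝ) - p) = m + 1 := by
      rw [← Nat.cast_sub (by omega), hm]; push_cast; ring
    have key : (m.choose s : ℝ) * (m + 1) = (m + 1).choose s * ((m : ℝ) + 1 - s) := by
      rcases le_or_gt s (m + 1) with h | h
      · have := congrArg (Nat.cast (R := ℝ)) (Nat.choose_mul_succ_eq m s)
        push_cast [Nat.cast_sub h] at this
        exact this
      · simp [Nat.choose_eq_zero_of_lt h, Nat.choose_eq_zero_of_lt (show m < s by omega)]
    rw [show d - (p + 1) = m by omega, hm, sub_sub, add_comm (s : ℝ), ← sub_sub, hdp]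
    have hc : (d.choose s : ℝ) ≠ 0 := by exact_mod_cast (Nat.choose_pos hs).ne'
    field_simp
    linear_combination key

lemma limeExp_psi_mul_disjoint {d : ℕ} (ν : ℝ) (T : Finset (Fin d)) :
    limeExp d (fun S => psi ν (S.card / d) * if Disjoint T S then 1 else 0)
      = alpha d ν T.card := by
  unfold limeExp alpha
  congr 1
  refine sum_congr rfl fun s hs => ?_
  have hcard : ∀ S ∈ ({S : Finset (Fin d) | S.card = s} : Finset _),
      psi ν (S.card / d) * (if Disjoint T S then 1 else 0)
        = psi ν (s / d) * (if Disjoint T S then 1 else 0) := fun S hS => by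
    rw [(mem_filter.1 hS).2]
  rw [sum_congr rfl hcard, ← mul_sum, sum_boole, filter_filter, card_filter_card_eq_disjoint,
    Fintype.card_fin, ← cast_choose_sub_div_cast_choose
      (card_le_univ T |>.trans_eq (Fintype.card_fin d)) (mem_Icc.1 hs).2]
  ring

lemma SigmaE_eq_borderedMatrix (d : ℕ) (ν : ℝ) :
    SigmaE d ν = borderedMatrix d (alpha d ν 0) (alpha d ν 1) (alpha d ν 1) (alpha d ν 2) := by
  ext i j
  cases i using Fin.cases with
  | zero =>
    cases j using Fin.cases with
    | zero => simpa [SigmaE, zeta] using limeExp_psi_mul_disjoint ν (∅ : Finset (Fin d))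
    | succ j => simpa [SigmaE, zeta] using limeExp_psi_mul_disjoint ν {j}
  | succ i =>
    cases j using Fin.cases with
    | zero => simpa [SigmaE, zeta] using limeExp_psi_mul_disjoint ν {i}
    | succ j =>
      by_cases hij : i = j
      · subst hij
        rw [borderedMatrix_succ_succ, if_pos rfl, ← card_singleton i,
          ← limeExp_psi_mul_disjoint]
        simp only [SigmaE, of_apply]
        congr 1 with S
        by_cases h : i ∈ S <;> simp [zeta, h]
      · simpa [SigmaE, zeta, hij, ite_and, card_pair (Ne.symm hij)] using
          limeExp_psi_mul_disjoint ν {j, i}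

section Moments

variable (d : ℕ) (ν : ℝ)

lemma alpha_zero : alpha d ν 0 = (∑ s ∈ Icc 1 d, psi ν (s / d)) / d := by
  simp [alpha, div_eq_inv_mul]

lemma alpha_one : alpha d ν 1 = (∑ s ∈ Icc 1 d, psi ν (s / d) * (d - s)) / d ^ 2 := by
  simp only [alpha, prod_range_one, Nat.cast_zero, sub_zero, div_eq_mul_inv, mul_sum, sum_mul]
  refine sum_congr rfl fun s _ => by ring

lemma alpha_two :
    alpha d ν 2
      = (∑ s ∈ Icc 1 d, psi ν (s / d) * ((d - s) * (d - s - 1))) / (d ^ 2 * (d - 1)) := by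
  simp only [alpha, prod_range_succ, prod_range_zero, Nat.cast_zero, Nat.cast_one, sub_zero,
    div_eq_mul_inv, mul_inv, mul_sum, sum_mul]
  refine sum_congr rfl fun s _ => by ring

variable {d}

lemma alpha_two_lt_alpha_one (hd : 2 ≤ d) : alpha d ν 2 < alpha d ν 1 := by
  have hd1 : (1 : ℝ) < d := by exact_mod_cast hd
  have hα1 : alpha d ν 1
      = (∑ s ∈ Icc 1 d, psi ν (s / d) * ((d - s) * (d - 1))) / (d ^ 2 * (d - 1)) := by
    simp_rw [alpha_one, ← mul_assoc, ← sum_mul]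
    field_simp [(sub_pos.2 hd1).ne']
  rw [← sub_pos, hα1, alpha_two, ← sub_div, ← sum_sub_distrib]
  refine div_pos (sum_pos' (fun s hs => ?_) ⟨1, by simp; omega, ?_⟩) (by positivity)
  · have hsd : (s : ℝ) ≤ d := by exact_mod_cast (mem_Icc.1 hs).2
    rw [← mul_sub]
    exact mul_nonneg (Real.exp_pos _).le (by nlinarith)
  · rw [← mul_sub]
    exact mul_pos (Real.exp_pos _) (by push_cast; nlinarith)

lemma cConst_mul_pow_three (hd : 2 ≤ d) :
    cConst d ν * d ^ 3
      = (∑ s ∈ Icc 1 d, psi ν (s / d)) * (∑ s ∈ Icc 1 d, psi ν (s / d) * (d - s) ^ 2)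
        - (∑ s ∈ Icc 1 d, psi ν (s / d) * (d - s)) ^ 2 := by
  have hd1 : (1 : ℝ) < d := by exact_mod_cast hd
  have hsq : ∑ s ∈ Icc 1 d, psi ν (s / d) * (d - s) ^ 2
      = ∑ s ∈ Icc 1 d, psi ν (s / d) * ((d - s) * (d - s - 1))
        + ∑ s ∈ Icc 1 d, psi ν (s / d) * (d - s) := by
    rw [← sum_add_distrib]
    exact sum_congr rfl fun _ _ => by ring
  rw [hsq, cConst, alpha_zero, alpha_one, alpha_two]
  field_simp [(sub_pos.2 hd1).ne']
  ring

lemma cConst_pos (hd : 2 ≤ d) : 0 < cConst d ν := by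
  have hd1 : (1 : ℝ) < d := by exact_mod_cast hd
  have hlt := sq_sum_mul_lt_sum_mul_sum (Icc 1 d) (fun s : ℕ => psi ν (s / d)) (fun s => d - s)
    (fun s _ => (Real.exp_pos _).le) (i := 1) (j := d) (by simp; omega) (by simp; omega)
    (Real.exp_pos _) (Real.exp_pos _) (by simpa using (sub_pos.2 hd1).ne')
  have h3 : (0 : ℝ) < d ^ 3 := by positivity
  nlinarith [cConst_mul_pow_three ν hd]

end Moments

lemma inv_SigmaE {d : ℕ} (hd : 2 ≤ d) (ν : ℝ) :
    (SigmaE d ν)⁻¹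
      = (cConst d ν)⁻¹ •
        borderedMatrix d (sigma0 d ν) (sigma1 d ν) (sigma2 d ν) (sigma3 d ν) := by
  have hΔ : alpha d ν 0 * (alpha d ν 1 + (d - 1) * alpha d ν 2) - d * alpha d ν 1 ^ 2
      = cConst d ν := by
    rw [cConst]; ring
  rw [SigmaE_eq_borderedMatrix, inv_borderedMatrix _ _ _ _
    (sub_ne_zero.2 (alpha_two_lt_alpha_one ν hd).ne') (hΔ ▸ (cConst_pos ν hd).ne'), hΔ]
  simp only [sigma0, sigma1, sigma2, sigma3, cConst]
  congr 2 <;> ring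

section Regression

variable {d : ℕ} (ν : ℝ) (g : Finset (Fin d) → ℝ)

lemma limeExp_mul_zeta_zero :
    limeExp d (fun S => psi ν (S.card / d) * g S * zeta d S 0)
      = limeExp d (fun S => psi ν (S.card / d) * g S) := by
  simp [zeta]

lemma limeExp_mul_zeta_succ (k : Fin d) :
    limeExp d (fun S => psi ν (S.card / d) * g S * zeta d S k.succ)
      = limeExp d (fun S => psi ν (S.card / d) * (if k ∉ S then 1 else 0) * g S) := by
  simp only [zeta, Fin.cons_succ, mul_right_comm]

lemma betaF_zero (hd : 2 ≤ d) :
    betaF d ν g 0 = (cConst d ν)⁻¹ *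
      (sigma0 d ν * limeExp d (fun S => psi ν (S.card / d) * g S)
        + sigma1 d ν * ∑ k : Fin d,
            limeExp d (fun S => psi ν (S.card / d) * (if k ∉ S then 1 else 0) * g S)) := by
  rw [betaF, inv_SigmaE hd, smul_mulVec, Pi.smul_apply, smul_eq_mul,
    borderedMatrix_mulVec_zero, limeExp_mul_zeta_zero]
  simp only [limeExp_mul_zeta_succ]

lemma betaF_succ (hd : 2 ≤ d) (j : Fin d) :
    betaF d ν g j.succ = (cConst d ν)⁻¹ *
      (sigma1 d ν * limeExp d (fun S => psi ν (S.card / d) * g S)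
        + sigma2 d ν * limeExp d (fun S => psi ν (S.card / d) * (if j ∉ S then 1 else 0) * g S)
        + sigma3 d ν * ∑ k ∈ univ \ {j},
            limeExp d (fun S => psi ν (S.card / d) * (if k ∉ S then 1 else 0) * g S)) := by
  rw [betaF, inv_SigmaE hd, smul_mulVec, Pi.smul_apply, smul_eq_mul,
    borderedMatrix_mulVec_succ, limeExp_mul_zeta_zero, sdiff_singleton_eq_erase,
    sum_erase_eq_sub (mem_univ j)]
  simp only [limeExp_mul_zeta_succ]
  ring

end Regression

theorem betaF_general_expression_general (d : ℕ) (hd : 2 ≤ d) (ν : ℝ)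
    (u : Fin d → ℝ) (f : (Fin d → ℝ) → ℝ) :
    betaF d ν (fun S => f (phiS u S)) 0
        = (cConst d ν)⁻¹ *
          (sigma0 d ν * limeExp d (fun S => psi ν ((S.card : ℝ) / (d : ℝ)) * f (phiS u S))
            + sigma1 d ν * ∑ k : Fin d,
                limeExp d (fun S => psi ν ((S.card : ℝ) / (d : ℝ)) *
                  (if k ∉ S then (1 : ℝ) else 0) * f (phiS u S)))
      ∧ ∀ j : Fin d,
        betaF d ν (fun S => f (phiS u S)) j.succ
          = (cConst d ν)⁻¹ *
            (sigma1 d ν * limeExp d (fun S => psi ν ((S.card : ℝ) / (d : ℝ)) * f (phiS u S))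
              + sigma2 d ν * limeExp d (fun S => psi ν ((S.card : ℝ) / (d : ℝ)) *
                  (if j ∉ S then (1 : ℝ) else 0) * f (phiS u S))
              + sigma3 d ν * ∑ k ∈ Finset.univ \ {j},
                  limeExp d (fun S => psi ν ((S.card : ℝ) / (d : ℝ)) *
                    (if k ∉ S then (1 : ℝ) else 0) * f (phiS u S))) :=
  ⟨betaF_zero ν _ hd, betaF_succ ν _ hd⟩

/-- expression of β^f for a general bounded measurable model f. -/
theorem betaF_general_expression (d : ℕ) (hd : 2 ≤ d) (ν : ℝ) (hν : 0 < ν)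
    (u : Fin d → ℝ) (hu : ∀ k, 0 < u k) (f : (Fin d → ℝ) → ℝ) (hf : Measurable f)
    (M : ℝ) (hM : 0 < M)
    (hbound : ∀ x : Fin d → ℝ, Real.sqrt (∑ i, (x i) ^ 2) ≤ 1 → |f x| ≤ M) :
    betaF d ν (fun S => f (phiS u S)) 0
        = (cConst d ν)⁻¹ *
          (sigma0 d ν * limeExp d (fun S => psi ν ((S.card : ℝ) / (d : ℝ)) * f (phiS u S))
            + sigma1 d ν * ∑ k : Fin d,
                limeExp d (fun S => psi ν ((S.card : ℝ) / (d : ℝ)) *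
                  (if k ∉ S then (1 : ℝ) else 0) * f (phiS u S)))
      ∧ ∀ j : Fin d,
        betaF d ν (fun S => f (phiS u S)) j.succ
          = (cConst d ν)⁻¹ *
            (sigma1 d ν * limeExp d (fun S => psi ν ((S.card : ℝ) / (d : ℝ)) * f (phiS u S))
              + sigma2 d ν * limeExp d (fun S => psi ν ((S.card : ℝ) / (d : ℝ)) *
                  (if j ∉ S then (1 : ℝ) else 0) * f (phiS u S))
              + sigma3 d ν * ∑ k ∈ Finset.univ \ {j},
                  limeExp d (fun S => psi ν ((S.card : ℝ) / (d : ℝ)) *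
                    (if k ∉ S then (1 : ℝ) else 0) * f (phiS u S))) :=
  betaF_general_expression_general d hd ν u f
end
end
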